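/- Given points P_s, P_{s+1}, …, P_{s+k} in ℝ³ with strictly increasing time coordinates, ε > 0, and any t_c > P_s.t, there exists a point Q with Q.t = P_{s+k}.t such that sed(P_{s+i}, segment P_sQ) ≤ ε for all i ∈ [1,k], if and only if the k projection disks D_i of radius c_i·ε centered at P_s + c_i·(P_{s+i} - P_s) on the plane X.t = t_c, where c_i = (t_c - P_s.t)/(P_{s+i}.t - P_s.t), have nonempty common intersection. -/

import Mathlib

noncomputable section

/-- Points of ℝ³, written (x, y, t) with the third coordinate interpreted as time. -/
abbrev Pt : Type := EuclideanSpace ℝ (Fin 3)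

/-- The time coordinate of a point. -/
def tm (P : Pt) : ℝ := P 2

/-- Spatial (x,y)-Euclidean distance between two points of ℝ³. -/
def sdist (P Q : Pt) : ℝ := Real.sqrt ((P 0 - Q 0)^2 + (P 1 - Q 1)^2)

/-- The synchronized point of `P` w.r.t. the segment from `Ps` to `E`:
linear interpolation with coefficient `c = (P.t - Ps.t)/(E.t - Ps.t)`. -/
def sync (Ps E P : Pt) : Pt := Ps + ((tm P - tm Ps) / (tm E - tm Ps)) • (E - Ps)

/-- The synchronous Euclidean distance of `P` to the segment from `Ps` to `E`. -/
def sed (P Ps E : Pt) : ℝ := dist P (sync Ps E P)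

/-- The spatio-temporal cone with apex `Ps` over the disk of radius `ε`
centered at `C` in the plane `X.t = C.t`: the union of all segments from `Ps`
to points of that disk. -/
def cone (Ps C : Pt) (ε : ℝ) : Set Pt :=
  {X | ∃ Z : Pt, tm Z = tm C ∧ sdist Z C ≤ ε ∧ X ∈ segment ℝ Ps Z}

/-!
The homothety `h` with centre `P_s` and ratio `λ = (t_c - P_s.t) / (P_{s+k}.t - P_s.t)` maps the
plane `X.t = P_{s+k}.t` bijectively onto the plane `X.t = t_c`; the candidate endpoints `Q` and the
candidate common points `X` correspond via `X = h Q`. For each `i`, the synchronized point of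
`P_{s+i}` on `P_s Q` lies at time `P_{s+i}.t`, so its synchronous distance is a purely spatial one,
and the homothety with centre `P_s` and ratio `c_i` sends it to `X` and `P_{s+i}` to the centre of
`D_i`, multiplying spatial distances by `c_i`. Hence `sed(P_{s+i}, P_s Q) ≤ ε` iff `X ∈ D_i`.
-/

open AffineMap

lemma homothety_apply_coord {ι : Type*} (c p : EuclideanSpace ℝ ι) (r : ℝ) (j : ι) :
    homothety c r p j = c j + r * (p j - c j) := by
  simp only [homothety_apply, vsub_eq_sub, vadd_eq_add, PiLp.add_apply, PiLp.smul_apply,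
    PiLp.sub_apply, smul_eq_mul]
  ring

lemma add_smul_sub_eq_homothety {V : Type*} [AddCommGroup V] [Module ℝ V] (c p : V) (r : ℝ) :
    c + r • (p - c) = homothety c r p := by
  rw [homothety_apply, vsub_eq_sub, vadd_eq_add, add_comm]

lemma tm_homothety (c p : Pt) (r : ℝ) : tm (homothety c r p) = tm c + r * (tm p - tm c) :=
  homothety_apply_coord c p r 2

lemma sdist_homothety (c p q : Pt) (r : ℝ) :
    sdist (homothety c r p) (homothety c r q) = |r| * sdist p q := by
  simp only [sdist, homothety_apply_coord]
  rw [← Real.sqrt_sq_eq_abs, ← Real.sqrt_mul (sq_nonneg r)]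
  ring_nf

lemma tm_homothety_of_tm_ne {c p : Pt} (h : tm p ≠ tm c) (t : ℝ) :
    tm (homothety c ((t - tm c) / (tm p - tm c)) p) = t := by
  rw [tm_homothety, div_mul_cancel₀ _ (sub_ne_zero.mpr h)]
  ring

lemma dist_eq_sdist_of_tm_eq {P Q : Pt} (h : tm P = tm Q) : dist P Q = sdist P Q := by
  rw [EuclideanSpace.dist_eq, Fin.sum_univ_three, sdist]
  simp only [tm] at h
  simp [Real.dist_eq, sq_abs, h]

lemma sync_eq_homothety (Ps E P : Pt) :
    sync Ps E P = homothety Ps ((tm P - tm Ps) / (tm E - tm Ps)) E :=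
  add_smul_sub_eq_homothety _ _ _

lemma tm_sync {Ps E : Pt} (h : tm Ps ≠ tm E) (P : Pt) : tm (sync Ps E P) = tm P := by
  rw [sync_eq_homothety, tm_homothety]
  field_simp [sub_ne_zero.mpr h.symm]
  ring

lemma sed_eq_sdist_sync {Ps E : Pt} (h : tm Ps ≠ tm E) (P : Pt) :
    sed P Ps E = sdist (sync Ps E P) P := by
  rw [sed, dist_comm, dist_eq_sdist_of_tm_eq (tm_sync h P)]

lemma sed_le_iff_sdist_homothety_le {Ps E P : Pt} {tc ε : ℝ} (hP : tm Ps < tm P)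
    (hE : tm Ps < tm E) (htc : tm Ps < tc) :
    sed P Ps E ≤ ε ↔
      sdist (homothety Ps ((tc - tm Ps) / (tm E - tm Ps)) E)
          (Ps + ((tc - tm Ps) / (tm P - tm Ps)) • (P - Ps)) ≤
        (tc - tm Ps) / (tm P - tm Ps) * ε := by
  have hc : 0 < (tc - tm Ps) / (tm P - tm Ps) := div_pos (sub_pos.mpr htc) (sub_pos.mpr hP)
  rw [← div_mul_div_cancel₀ (sub_pos.mpr hP).ne', homothety_mul_apply, ← sync_eq_homothety, add_smul_sub_eq_homothety,
    sdist_homothety, abs_of_pos hc, mul_le_mul_iff_right₀ hc, sed_eq_sdist_sync hE.ne]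

theorem stmt3_general (k : ℕ) (hk : 1 ≤ k) (P : ℕ → Pt)
    (hmono : ∀ i j : ℕ, i < j → j ≤ k → tm (P i) < tm (P j))
    (ε : ℝ) (tc : ℝ) (htc : tm (P 0) < tc) :
    (∃ Q : Pt, tm Q = tm (P k) ∧ ∀ i : ℕ, 1 ≤ i → i ≤ k → sed (P i) (P 0) Q ≤ ε) ↔
      (⋂ i ∈ Set.Icc 1 k, {X : Pt | tm X = tc ∧
        sdist X (P 0 + ((tc - tm (P 0)) / (tm (P i) - tm (P 0))) • (P i - P 0)) ≤
          ((tc - tm (P 0)) / (tm (P i) - tm (P 0))) * ε}).Nonempty := by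
  have hP : ∀ i ∈ Set.Icc 1 k, tm (P 0) < tm (P i) := fun i hi => hmono 0 i hi.1 hi.2
  have hPk : tm (P 0) < tm (P k) := hP k ⟨hk, le_rfl⟩
  simp only [Set.Nonempty, Set.mem_iInter₂, Set.mem_ofPred_eq]
  constructor
  · rintro ⟨Q, hQ, hsed⟩
    rw [← hQ] at hPk
    exact ⟨_, fun i hi => ⟨tm_homothety_of_tm_ne hPk.ne' tc,
      (sed_le_iff_sdist_homothety_le (hP i hi) hPk htc).mp (hsed i hi.1 hi.2)⟩⟩
  · rintro ⟨X, hX⟩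
    have hXt : tm X = tc := (hX 1 ⟨le_rfl, hk⟩).1
    set Q := homothety (P 0) ((tm (P k) - tm (P 0)) / (tm X - tm (P 0))) X
    have hQ : tm Q = tm (P k) := tm_homothety_of_tm_ne (hXt ▸ htc.ne') _
    have hXQ : X = homothety (P 0) ((tc - tm (P 0)) / (tm Q - tm (P 0))) Q := by
      rw [← homothety_mul_apply, hQ, hXt, div_mul_div_cancel₀ (sub_pos.mpr hPk).ne',
        div_self (sub_pos.mpr htc).ne', homothety_one, AffineMap.id_apply]
    refine ⟨Q, hQ, fun i hi1 hik => ?_⟩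
    rw [sed_le_iff_sdist_homothety_le (hP i ⟨hi1, hik⟩) (hQ ▸ hPk) htc, ← hXQ]
    exact (hX i ⟨hi1, hik⟩).2

/-- existence of Q at time P_{s+k}.t with all synchronous distances
at most ε iff the k projection disks on the plane X.t = t_c have a common point. -/
theorem stmt3 (k : ℕ) (hk : 1 ≤ k) (P : ℕ → Pt)
    (hmono : ∀ i j : ℕ, i < j → j ≤ k → tm (P i) < tm (P j))
    (ε : ℝ) (hε : 0 < ε) (tc : ℝ) (htc : tm (P 0) < tc) :
    (∃ Q : Pt, tm Q = tm (P k) ∧ ∀ i : ℕ, 1 ≤ i → i ≤ k → sed (P i) (P 0) Q ≤ ε) ↔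
      (⋂ i ∈ Set.Icc 1 k, {X : Pt | tm X = tc ∧
        sdist X (P 0 + ((tc - tm (P 0)) / (tm (P i) - tm (P 0))) • (P i - P 0)) ≤
          ((tc - tm (P 0)) / (tm (P i) - tm (P 0))) * ε}).Nonempty :=
  stmt3_general k hk P hmono ε tc htc
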